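/- arXiv:1508.00069 — 7 statements merged into one kernel-verified Lean document; each statement's English description precedes it below -/
import Mathlib

section
/- Let A be a real tensor of order m and dimension n (with m ≥ 2, n ≥ 1). Then A is an S-tensor if and only if for every q ∈ ℝⁿ the tensor complementarity problem TCP(A,q) is feasible, i.e., there exists x ∈ ℝⁿ with x ≥ 0 and q + A x^{m-1} ≥ 0. -/
open Finset

/-- The `i`-th component of `A x^{m-1}` for a real tensor `A` of order `m = k+1`
and dimension `n`. -/
def tmul {n k : ℕ} (A : (Fin (k + 1) → Fin n) → ℝ) (x : Fin n → ℝ) : Fin n → ℝ :=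
  fun i => ∑ f : Fin k → Fin n, A (Fin.cons i f) * ∏ j, x (f j)

/-- `A x^m := xᵀ (A x^{m-1})`. -/
def tpow {n k : ℕ} (A : (Fin (k + 1) → Fin n) → ℝ) (x : Fin n → ℝ) : ℝ :=
  ∑ i, x i * tmul A x i

/-- `x` is a solution of the tensor complementarity problem TCP(A, q). -/
def TCPSol {n k : ℕ} (A : (Fin (k + 1) → Fin n) → ℝ) (q x : Fin n → ℝ) : Prop :=
  (∀ i, 0 ≤ x i) ∧ (∀ i, 0 ≤ q i + tmul A x i) ∧ ∑ i, x i * (q i + tmul A x i) = 0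

/-- `A` is an S-tensor: the system `A x^{m-1} > 0, x > 0` has a solution. -/
def STensor {n k : ℕ} (A : (Fin (k + 1) → Fin n) → ℝ) : Prop :=
  ∃ x : Fin n → ℝ, (∀ i, 0 < x i) ∧ ∀ i, 0 < tmul A x i

/-- `A` is strictly semi-positive. -/
def StrictlySemiPositive {n k : ℕ} (A : (Fin (k + 1) → Fin n) → ℝ) : Prop :=
  ∀ x : Fin n → ℝ, (∀ i, 0 ≤ x i) → x ≠ 0 → ∃ j, 0 < x j ∧ 0 < tmul A x j

/-- `A` is an R₀-tensor: `x = 0` is the unique solution of TCP(A, 0). -/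
def R0Tensor {n k : ℕ} (A : (Fin (k + 1) → Fin n) → ℝ) : Prop :=
  ∀ x : Fin n → ℝ, TCPSol A (fun _ => 0) x ↔ x = 0

/-- `A` is a symmetric tensor: entries invariant under permutations of the indices. -/
def TSymmetric {n k : ℕ} (A : (Fin (k + 1) → Fin n) → ℝ) : Prop :=
  ∀ (σ : Equiv.Perm (Fin (k + 1))) (g : Fin (k + 1) → Fin n), A (g ∘ σ) = A g

/-- The `p`-norm `(∑ |x_i|^p)^{1/p}` of a vector. -/
noncomputable def pnorm {n : ℕ} (p : ℝ) (x : Fin n → ℝ) : ℝ :=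
  (∑ i, |x i| ^ p) ^ (1 / p)

/-- The `∞`-norm `max_i |x_i|` of a vector. -/
noncomputable def inftynorm {n : ℕ} (x : Fin n → ℝ) : ℝ :=
  ⨆ i, |x i|


lemma tmul_smul' {n k : ℕ} (A : (Fin (k + 1) → Fin n) → ℝ) (t : ℝ) (x : Fin n → ℝ) (i : Fin n) :
    tmul A (fun j => t * x j) i = t ^ k * tmul A x i := by
  unfold tmul
  rw [Finset.mul_sum]
  refine Finset.sum_congr rfl fun f _ => ?_
  rw [Finset.prod_mul_distrib, Finset.prod_const]
  simp [Finset.card_univ]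
  ring

lemma tmul_cont' {n k : ℕ} (A : (Fin (k + 1) → Fin n) → ℝ) (x : Fin n → ℝ) (i : Fin n) :
    Continuous fun ε : ℝ => tmul A (fun j => x j + ε) i := by
  unfold tmul
  apply continuous_finset_sum
  intro f _
  exact continuous_const.mul
    (continuous_finset_prod _ fun j _ => continuous_const.add continuous_id)

theorem stmt1 {n k : ℕ} (hn : 1 ≤ n) (hk : 1 ≤ k) (A : (Fin (k + 1) → Fin n) → ℝ) :
    STensor A ↔ ∀ q : Fin n → ℝ, ∃ x : Fin n → ℝ,
      (∀ i, 0 ≤ x i) ∧ ∀ i, 0 ≤ q i + tmul A x i := by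
  constructor
  · rintro ⟨x, hx, hAx⟩ q
    have hne : (Finset.univ : Finset (Fin n)).Nonempty := by
      have : Nonempty (Fin n) := Fin.pos_iff_nonempty.mp hn
      exact Finset.univ_nonempty
    set T := Finset.univ.sup' hne (fun i => -q i / tmul A x i) with hT
    set t := max 1 T with ht
    have ht1 : (1:ℝ) ≤ t := le_max_left _ _
    refine ⟨fun j => t * x j, fun i => mul_nonneg (le_trans zero_le_one ht1) (hx i).le,
      fun i => ?_⟩
    rw [tmul_smul']
    have hTi : -q i / tmul A x i ≤ t :=
      le_trans (Finset.le_sup' (fun i => -q i / tmul A x i) (Finset.mem_univ i)) (le_max_right _ _)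
    have htk : t ≤ t ^ k := le_self_pow₀ ht1 (by omega)
    have := (div_le_iff₀ (hAx i)).mp (hTi.trans htk)
    linarith
  · intro h
    obtain ⟨x, hx, hq⟩ := h (fun _ => -1)
    have key : ∀ i, (1:ℝ) ≤ tmul A x i := by
      intro i; have := hq i; linarith
    have hev : ∀ᶠ ε : ℝ in nhds 0, ∀ i, 0 < tmul A (fun j => x j + ε) i := by
      rw [Filter.eventually_all]
      intro i
      have hc : Filter.Tendsto (fun ε : ℝ => tmul A (fun j => x j + ε) i) (nhds 0)
          (nhds (tmul A (fun j => x j + 0) i)) := (tmul_cont' A x i).continuousAt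
      have h0 : (0:ℝ) < tmul A (fun j => x j + 0) i := by
        simp only [add_zero]; linarith [key i]
      exact hc.eventually (eventually_gt_nhds h0)
    have hev' := hev.filter_mono (nhdsWithin_le_nhds (s := Set.Ioi (0:ℝ)))
    obtain ⟨ε, hε, hεpos⟩ := (hev'.and self_mem_nhdsWithin).exists
    exact ⟨fun j => x j + ε, fun i => add_pos_of_nonneg_of_pos (hx i) hεpos, hε⟩
end

section
/- Let A be a real tensor of order m and dimension n (with m ≥ 2, n ≥ 1). If A is a Q-tensor, i.e., for every q ∈ ℝⁿ the tensor complementarity problem TCP(A,q) has a solution, then A is an S-tensor. -/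
open Finset

theorem stmt2 {n k : ℕ} (hn : 1 ≤ n) (hk : 1 ≤ k) (A : (Fin (k + 1) → Fin n) → ℝ)
    (hQ : ∀ q : Fin n → ℝ, ∃ x : Fin n → ℝ, TCPSol A q x) :
    STensor A := by
  obtain ⟨x, hx0, hxq, _⟩ := hQ (fun _ => -1)
  have h1 : ∀ i, 1 ≤ tmul A x i := by
    intro i
    have := hxq i
    simp only at this
    linarith
  have cont : ∀ i, Continuous (fun t : ℝ => tmul A (fun j => x j + t) i) := by
    intro i
    unfold tmul
    continuity
  have hev : ∀ᶠ t in nhdsWithin (0:ℝ) (Set.Ioi 0),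
      (∀ i, 0 < tmul A (fun j => x j + t) i) ∧ t ∈ Set.Ioi (0:ℝ) := by
    apply Filter.Eventually.and
    · rw [Filter.eventually_all]
      intro i
      have htend : Filter.Tendsto (fun t : ℝ => tmul A (fun j => x j + t) i)
          (nhdsWithin (0:ℝ) (Set.Ioi 0)) (nhds (tmul A x i)) := by
        have := (cont i).continuousAt (x := (0:ℝ))
        simp only [ContinuousAt, add_zero] at this
        exact this.mono_left nhdsWithin_le_nhds
      exact htend.eventually_const_lt (lt_of_lt_of_le one_pos (h1 i))
    · exact self_mem_nhdsWithin
  obtain ⟨t, hpos, ht⟩ := hev.exists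
  exact ⟨fun j => x j + t, fun j => add_pos_of_nonneg_of_pos (hx0 j) ht, hpos⟩
end

section
/- Let A be a symmetric strictly semi-positive real tensor of order m and dimension n (with m ≥ 2, n ≥ 1), and let μ(A) := min{ A y^m : y ≥ 0, ‖y‖₂ = 1 } (the minimum of A y^m over nonnegative vectors of unit Euclidean norm). If x is a solution of the tensor complementarity problem TCP(A,q) for some q ∈ ℝⁿ, then ‖x‖₂^{m-1} ≤ ‖(−q)₊‖₂ / μ(A), where (−q)₊ is the componentwise positive part of −q and ‖·‖₂ is the Euclidean norm. -/
open Finset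

namespace Stmt8

variable {n k : ℕ}

noncomputable def NN (x : Fin n → ℝ) : ℝ := Real.sqrt (∑ i, x i ^ 2)

lemma pnorm_two_eq (x : Fin n → ℝ) : pnorm 2 x = NN x := by
  unfold pnorm NN
  rw [Real.sqrt_eq_rpow]
  congr 1
  refine Finset.sum_congr rfl fun i _ => ?_
  rw [show (2:ℝ) = ((2:ℕ):ℝ) by norm_num, Real.rpow_natCast, sq_abs]

lemma NN_nonneg (x : Fin n → ℝ) : 0 ≤ NN x := Real.sqrt_nonneg _

lemma NN_smul {c : ℝ} (hc : 0 ≤ c) (x : Fin n → ℝ) : NN (c • x) = c * NN x := by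
  unfold NN
  have h : ∑ i, (c • x) i ^ 2 = c ^ 2 * ∑ i, x i ^ 2 := by
    rw [Finset.mul_sum]
    exact Finset.sum_congr rfl fun i _ => by
      simp only [Pi.smul_apply, smul_eq_mul]; ring
  rw [h, Real.sqrt_mul (sq_nonneg c), Real.sqrt_sq hc]

lemma NN_pos {x : Fin n → ℝ} (hx : x ≠ 0) : 0 < NN x := by
  obtain ⟨i, hi⟩ := Function.ne_iff.1 hx
  refine Real.sqrt_pos.2 (Finset.sum_pos' (fun j _ => sq_nonneg _)
    ⟨i, Finset.mem_univ i, ?_⟩)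
  have : x i ≠ 0 := hi
  positivity

lemma sum_cons (F : (Fin (k+1) → Fin n) → ℝ) :
    ∑ g : Fin (k+1) → Fin n, F g = ∑ i : Fin n, ∑ f : Fin k → Fin n, F (Fin.cons i f) := by
  rw [← (Fin.consEquiv (fun _ => Fin n)).sum_comp F, Fintype.sum_prod_type]
  rfl

lemma tpow_eq (A : (Fin (k + 1) → Fin n) → ℝ) (x : Fin n → ℝ) :
    tpow A x = ∑ g : Fin (k+1) → Fin n, A g * ∏ l, x (g l) := by
  rw [sum_cons (fun g => A g * ∏ l, x (g l))]
  unfold tpow tmul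
  refine Finset.sum_congr rfl fun i _ => ?_
  rw [Finset.mul_sum]
  refine Finset.sum_congr rfl fun f _ => ?_
  rw [Fin.prod_univ_succ]
  simp only [Fin.cons_zero, Fin.cons_succ]
  ring

lemma tmul_smul (A : (Fin (k + 1) → Fin n) → ℝ) (c : ℝ) (x : Fin n → ℝ) (i : Fin n) :
    tmul A (c • x) i = c ^ k * tmul A x i := by
  unfold tmul
  rw [Finset.mul_sum]
  refine Finset.sum_congr rfl fun f _ => ?_
  have h : ∏ j, (c • x) (f j) = c ^ k * ∏ j, x (f j) := by
    simp only [Pi.smul_apply, smul_eq_mul, Finset.prod_mul_distrib, Finset.prod_const,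
      Finset.card_univ, Fintype.card_fin]
  rw [h]; ring

lemma tpow_smul (A : (Fin (k + 1) → Fin n) → ℝ) (c : ℝ) (x : Fin n → ℝ) :
    tpow A (c • x) = c ^ (k+1) * tpow A x := by
  unfold tpow
  rw [Finset.mul_sum]
  refine Finset.sum_congr rfl fun i _ => ?_
  rw [tmul_smul]
  simp only [Pi.smul_apply, smul_eq_mul]
  ring

lemma erase_zero_prod (y : Fin n → ℝ) (j : Fin n) (f : Fin k → Fin n) :
    ∏ l ∈ Finset.univ.erase (0 : Fin (k+1)), y ((Fin.cons j f : Fin (k+1) → Fin n) l)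
      = ∏ m, y (f m) := by
  rw [Fin.univ_succ, Finset.erase_cons, Finset.prod_map]
  simp [Fin.succEmb]

lemma key (A : (Fin (k + 1) → Fin n) → ℝ) (hsym : TSymmetric A) (y : Fin n → ℝ)
    (j : Fin n) (l : Fin (k+1)) :
    ∑ g : Fin (k+1) → Fin n,
      A g * ((∏ l' ∈ Finset.univ.erase l, y (g l')) * (Pi.single j 1 : Fin n → ℝ) (g l))
      = tmul A y j := by
  have hmain : ∀ g : Fin (k+1) → Fin n,
      A (g ∘ Equiv.swap 0 l) * ((∏ l' ∈ Finset.univ.erase l, y ((g ∘ Equiv.swap 0 l) l')) *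
        (Pi.single j 1 : Fin n → ℝ) ((g ∘ Equiv.swap 0 l) l))
      = A g * ((∏ l' ∈ Finset.univ.erase (0 : Fin (k+1)), y (g l')) *
        (Pi.single j 1 : Fin n → ℝ) (g 0)) := by
    intro g
    have h1 : A (g ∘ Equiv.swap 0 l) = A g := hsym (Equiv.swap 0 l) g
    have h2 : (g ∘ Equiv.swap 0 l) l = g 0 := by
      simp [Equiv.swap_apply_right]
    have h3 : ∏ l' ∈ Finset.univ.erase l, y ((g ∘ Equiv.swap 0 l) l')
        = ∏ l' ∈ Finset.univ.erase (0 : Fin (k+1)), y (g l') := by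
      refine Finset.prod_equiv (Equiv.swap 0 l) ?_ ?_
      · intro i
        simp only [Finset.mem_erase, Finset.mem_univ, and_true]
        constructor
        · intro h hc
          exact h (by simpa using congrArg (Equiv.swap 0 l) (hc.trans (Equiv.swap_apply_right 0 l).symm))
        · intro h hc
          exact h (by rw [hc, Equiv.swap_apply_right])
      · intro i _; rfl
    rw [h1, h2, h3]
  have hre : ∑ g : Fin (k+1) → Fin n,
      A g * ((∏ l' ∈ Finset.univ.erase l, y (g l')) * (Pi.single j 1 : Fin n → ℝ) (g l))
      = ∑ g : Fin (k+1) → Fin n,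
      A g * ((∏ l' ∈ Finset.univ.erase (0 : Fin (k+1)), y (g l')) *
        (Pi.single j 1 : Fin n → ℝ) (g 0)) := by
    rw [← (Equiv.arrowCongr (Equiv.swap (0 : Fin (k+1)) l) (Equiv.refl (Fin n))).sum_comp
      (fun g => A g * ((∏ l' ∈ Finset.univ.erase l, y (g l')) *
        (Pi.single j 1 : Fin n → ℝ) (g l)))]
    refine Finset.sum_congr rfl fun g _ => ?_
    have hEg : (Equiv.arrowCongr (Equiv.swap (0 : Fin (k+1)) l) (Equiv.refl (Fin n))) g
        = g ∘ Equiv.swap 0 l := by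
      funext a
      simp [Equiv.arrowCongr]
    rw [hEg, hmain g]
  rw [hre, sum_cons (fun g => A g * ((∏ l' ∈ Finset.univ.erase (0 : Fin (k+1)), y (g l')) *
    (Pi.single j 1 : Fin n → ℝ) (g 0)))]
  refine (Finset.sum_eq_single j ?_ ?_).trans ?_
  · intro i _ hij
    refine Finset.sum_eq_zero fun f _ => ?_
    simp only [Fin.cons_zero, Pi.single_apply, if_neg hij, mul_zero]
  · intro h
    exact absurd (Finset.mem_univ j) h
  · unfold tmul
    refine Finset.sum_congr rfl fun f _ => ?_
    simp [Fin.cons_zero, Pi.single_apply, erase_zero_prod]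

lemma hasDerivAt_f (A : (Fin (k + 1) → Fin n) → ℝ) (hsym : TSymmetric A)
    (y : Fin n → ℝ) (j : Fin n) :
    HasDerivAt (fun t : ℝ => tpow A (fun i => y i - t * (Pi.single j 1 : Fin n → ℝ) i))
      (-((k+1 : ℝ) * tmul A y j)) 0 := by
  have hfun : (fun t : ℝ => tpow A (fun i => y i - t * (Pi.single j 1 : Fin n → ℝ) i))
      = fun t => ∑ g : Fin (k+1) → Fin n, A g *
          ∏ l, (y (g l) - t * (Pi.single j 1 : Fin n → ℝ) (g l)) := by
    funext t; rw [tpow_eq]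
  rw [hfun]
  have hterm : ∀ g ∈ (Finset.univ : Finset (Fin (k+1) → Fin n)),
      HasDerivAt (fun t : ℝ => A g * ∏ l, (y (g l) - t * (Pi.single j 1 : Fin n → ℝ) (g l)))
        (A g * ∑ l, (∏ l' ∈ Finset.univ.erase l,
            (y (g l') - 0 * (Pi.single j 1 : Fin n → ℝ) (g l'))) •
          (-((Pi.single j 1 : Fin n → ℝ) (g l)))) 0 := by
    intro g _
    refine HasDerivAt.const_mul _ (HasDerivAt.fun_finsetProd fun l _ => ?_)
    exact (hasDerivAt_mul_const ((Pi.single j 1 : Fin n → ℝ) (g l))).const_sub (y (g l))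
  have hsum := HasDerivAt.fun_sum hterm
  convert hsum using 1
  · rfl
  · rfl
  simp only [zero_mul, sub_zero, smul_eq_mul, mul_neg]
  symm
  calc ∑ g : Fin (k+1) → Fin n, A g * ∑ l, -((∏ l' ∈ Finset.univ.erase l, y (g l')) *
          (Pi.single j 1 : Fin n → ℝ) (g l))
      = ∑ g : Fin (k+1) → Fin n, ∑ l, -(A g * ((∏ l' ∈ Finset.univ.erase l, y (g l')) *
          (Pi.single j 1 : Fin n → ℝ) (g l))) := by
        refine Finset.sum_congr rfl fun g _ => ?_
        rw [Finset.mul_sum]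
        exact Finset.sum_congr rfl fun l _ => by ring
    _ = ∑ l : Fin (k+1), ∑ g : Fin (k+1) → Fin n, -(A g *
          ((∏ l' ∈ Finset.univ.erase l, y (g l')) *
          (Pi.single j 1 : Fin n → ℝ) (g l))) := Finset.sum_comm
    _ = ∑ _l : Fin (k+1), -(tmul A y j) := by
        refine Finset.sum_congr rfl fun l _ => ?_
        rw [Finset.sum_neg_distrib, key A hsym y j l]
    _ = -((k+1:ℝ) * tmul A y j) := by
        rw [Finset.sum_const, Finset.card_univ, Fintype.card_fin]
        push_cast
        ring

lemma hasDerivAt_G (y : Fin n → ℝ) (j : Fin n) :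
    HasDerivAt (fun t : ℝ => ∑ i, (y i - t * (Pi.single j 1 : Fin n → ℝ) i) ^ 2)
      (-(2 * y j)) 0 := by
  have hterm : ∀ i ∈ (Finset.univ : Finset (Fin n)), HasDerivAt
      (fun t : ℝ => (y i - t * (Pi.single j 1 : Fin n → ℝ) i) ^ 2)
      (((2:ℕ):ℝ) * (y i - 0 * (Pi.single j 1 : Fin n → ℝ) i) ^ (2-1) *
        (-((Pi.single j 1 : Fin n → ℝ) i))) 0 := by
    intro i _
    exact HasDerivAt.pow
      ((hasDerivAt_mul_const ((Pi.single j 1 : Fin n → ℝ) i)).const_sub (y i)) 2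
  have hsum := HasDerivAt.fun_sum hterm
  convert hsum using 1
  · rfl
  · rfl
  rw [Finset.sum_congr rfl (fun i _ => ?_), Finset.sum_ite_eq' Finset.univ j
    (fun i => -(2 * y i))]
  · simp
  · rw [Pi.single_apply]
    by_cases h : i = j <;> simp [h] <;> ring

lemma exists_lt_of_hasDerivAt_neg {φ : ℝ → ℝ} {d : ℝ} (hφ : HasDerivAt φ d 0) (hd : d < 0)
    {ε : ℝ} (hε : 0 < ε) : ∃ t : ℝ, 0 < t ∧ t < ε ∧ φ t < φ 0 := by
  have h := hasDerivAt_iff_tendsto_slope.1 hφ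
  have hlt : ∀ᶠ t in nhdsWithin (0:ℝ) {(0:ℝ)}ᶜ, slope φ 0 t < 0 :=
    h.eventually_lt_const hd
  have hmono : nhdsWithin (0:ℝ) (Set.Ioi 0) ≤ nhdsWithin (0:ℝ) {(0:ℝ)}ᶜ :=
    nhdsWithin_mono 0 (fun t ht => ne_of_gt ht)
  have hlt2 : ∀ᶠ t in nhdsWithin (0:ℝ) (Set.Ioi 0), slope φ 0 t < 0 := hlt.filter_mono hmono
  have hsmall : ∀ᶠ t in nhdsWithin (0:ℝ) (Set.Ioi 0), t ∈ Set.Ioo (0:ℝ) ε :=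
    Filter.eventually_iff.2 (Ioo_mem_nhdsGT_of_mem ⟨le_refl 0, hε⟩)
  obtain ⟨t, h1, h2⟩ := (hlt2.and hsmall).exists
  refine ⟨t, h2.1, h2.2, ?_⟩
  rw [slope_def_field, sub_zero] at h1
  have := (div_neg_iff).1 h1
  rcases this with ⟨ha, hb⟩ | ⟨ha, hb⟩
  · linarith [h2.1]
  · linarith

lemma tpow_cont (A : (Fin (k + 1) → Fin n) → ℝ) : Continuous (tpow A) := by
  have h : (tpow A : (Fin n → ℝ) → ℝ)
      = fun x => ∑ g : Fin (k+1) → Fin n, A g * ∏ l, x (g l) := funext (tpow_eq A)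
  rw [h]
  exact continuous_finset_sum _ fun g _ => continuous_const.mul
    (continuous_finset_prod _ fun l _ => continuous_apply _)

lemma sum_sq_eq_one {y : Fin n → ℝ} (hy : NN y = 1) : ∑ i, y i ^ 2 = 1 := by
  have h0 : (0:ℝ) ≤ ∑ i, y i ^ 2 := Finset.sum_nonneg fun _ _ => sq_nonneg _
  unfold NN at hy
  nlinarith [Real.sq_sqrt h0]

lemma exists_min (hn : 1 ≤ n) (A : (Fin (k+1) → Fin n) → ℝ) :
    ∃ y₀ : Fin n → ℝ, ((∀ i, 0 ≤ y₀ i) ∧ NN y₀ = 1) ∧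
      ∀ z : Fin n → ℝ, (∀ i, 0 ≤ z i) → NN z = 1 → tpow A y₀ ≤ tpow A z := by
  set D : Set (Fin n → ℝ) := {y | (∀ i, 0 ≤ y i) ∧ NN y = 1} with hD
  have hNcont : Continuous (NN : (Fin n → ℝ) → ℝ) :=
    (continuous_finset_sum _ fun i _ => (continuous_apply i).pow 2).sqrt
  have hclosed : IsClosed D := by
    have h1 : IsClosed {y : Fin n → ℝ | ∀ i, 0 ≤ y i} := by
      have he : {y : Fin n → ℝ | ∀ i, 0 ≤ y i} = ⋂ i, {y | 0 ≤ y i} := by ext; simp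
      rw [he]
      exact isClosed_iInter fun i => isClosed_le continuous_const (continuous_apply i)
    have h2 : IsClosed {y : Fin n → ℝ | NN y = 1} := isClosed_eq hNcont continuous_const
    exact h1.inter h2
  have hbdd : Bornology.IsBounded D := by
    refine (Metric.isBounded_closedBall (x := (0 : Fin n → ℝ)) (r := 1)).subset ?_
    intro y hy
    rw [Metric.mem_closedBall, dist_zero_right]
    rw [pi_norm_le_iff_of_nonneg zero_le_one]
    intro i
    rw [Real.norm_eq_abs]
    have hsum : ∑ i', y i' ^ 2 = 1 := sum_sq_eq_one hy.2
    have hle : y i ^ 2 ≤ 1 := hsum ▸ Finset.single_le_sum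
      (fun i' _ => sq_nonneg (y i')) (Finset.mem_univ i)
    nlinarith [abs_nonneg (y i), sq_abs (y i)]
  have hcompact : IsCompact D := Metric.isCompact_of_isClosed_isBounded hclosed hbdd
  have i0 : Fin n := ⟨0, hn⟩
  have hmem : (Pi.single i0 1 : Fin n → ℝ) ∈ D := by
    constructor
    · intro i
      rw [Pi.single_apply]
      split <;> norm_num
    · unfold NN
      have : ∑ i, (Pi.single i0 1 : Fin n → ℝ) i ^ 2 = 1 := by
        have h : ∀ i, (Pi.single i0 1 : Fin n → ℝ) i ^ 2 = if i = i0 then 1 else 0 := by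
          intro i; rw [Pi.single_apply]; split <;> norm_num
        rw [Finset.sum_congr rfl fun i _ => h i, Finset.sum_ite_eq' Finset.univ i0 fun _ => (1:ℝ)]
        simp
      rw [this, Real.sqrt_one]
  obtain ⟨y₀, hy₀D, hminOn⟩ := hcompact.exists_isMinOn ⟨_, hmem⟩ (tpow_cont A).continuousOn
  exact ⟨y₀, hy₀D, fun z h1 h2 => hminOn ⟨h1, h2⟩⟩

lemma min_le_scaled (A : (Fin (k+1) → Fin n) → ℝ) (y₀ : Fin n → ℝ)
    (hmin : ∀ z : Fin n → ℝ, (∀ i, 0 ≤ z i) → NN z = 1 → tpow A y₀ ≤ tpow A z)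
    (z : Fin n → ℝ) (hz : ∀ i, 0 ≤ z i) (hzne : z ≠ 0) :
    tpow A y₀ * NN z ^ (k+1) ≤ tpow A z := by
  have hNz := NN_pos hzne
  set w : Fin n → ℝ := (NN z)⁻¹ • z with hw
  have hw1 : ∀ i, 0 ≤ w i := by
    intro i
    have : w i = (NN z)⁻¹ * z i := rfl
    rw [this]
    exact mul_nonneg (inv_nonneg.2 hNz.le) (hz i)
  have hw2 : NN w = 1 := by
    rw [hw, NN_smul (inv_nonneg.2 hNz.le), inv_mul_cancel₀ hNz.ne']
  have h := hmin w hw1 hw2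
  have hw3 : tpow A w = ((NN z)⁻¹) ^ (k+1) * tpow A z := tpow_smul A _ z
  rw [hw3] at h
  calc tpow A y₀ * NN z ^ (k+1)
      ≤ (((NN z)⁻¹) ^ (k+1) * tpow A z) * NN z ^ (k+1) :=
        mul_le_mul_of_nonneg_right h (pow_nonneg hNz.le _)
    _ = tpow A z := by
        rw [inv_pow, mul_comm _ (tpow A z), mul_assoc, inv_mul_cancel₀ (pow_ne_zero _ hNz.ne'), mul_one]

lemma min_pos (hn : 1 ≤ n) (A : (Fin (k+1) → Fin n) → ℝ) (hsym : TSymmetric A)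
    (hssp : StrictlySemiPositive A) (y₀ : Fin n → ℝ) (hy₀ : (∀ i, 0 ≤ y₀ i) ∧ NN y₀ = 1)
    (hmin : ∀ z : Fin n → ℝ, (∀ i, 0 ≤ z i) → NN z = 1 → tpow A y₀ ≤ tpow A z) :
    0 < tpow A y₀ := by
  by_contra hμ
  push_neg at hμ
  have hy₀ne : y₀ ≠ 0 := by
    intro h
    rw [h] at hy₀
    have := hy₀.2
    unfold NN at this
    simp at this
  obtain ⟨j, hyj, htj⟩ := hssp y₀ hy₀.1 hy₀ne
  set μ := tpow A y₀ with hμdef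
  set G : ℝ → ℝ := fun t => ∑ i, (y₀ i - t * (Pi.single j 1 : Fin n → ℝ) i) ^ 2 with hGdef
  set f : ℝ → ℝ := fun t => tpow A (fun i => y₀ i - t * (Pi.single j 1 : Fin n → ℝ) i) with hfdef
  set φ : ℝ → ℝ := fun t => f t - μ * Real.sqrt (G t) ^ (k+1) with hφdef
  have hG0 : G 0 = 1 := by
    rw [hGdef]
    simp only [zero_mul, sub_zero]
    exact sum_sq_eq_one hy₀.2
  have hG : HasDerivAt G (-(2 * y₀ j)) 0 := hasDerivAt_G y₀ j
  have hf : HasDerivAt f (-((k+1 : ℝ) * tmul A y₀ j)) 0 := hasDerivAt_f A hsym y₀ j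
  have hsqrtG : HasDerivAt (fun t => Real.sqrt (G t)) ((-(2 * y₀ j)) / (2 * Real.sqrt (G 0))) 0 :=
    hG.sqrt (by rw [hG0]; norm_num)
  have hψ : HasDerivAt (fun t => Real.sqrt (G t) ^ (k+1))
      (((k+1 : ℕ) : ℝ) * Real.sqrt (G 0) ^ (k+1-1) * ((-(2 * y₀ j)) / (2 * Real.sqrt (G 0)))) 0 :=
    HasDerivAt.pow hsqrtG (k+1)
  have hψval : ((k+1 : ℕ) : ℝ) * Real.sqrt (G 0) ^ (k+1-1) * ((-(2 * y₀ j)) / (2 * Real.sqrt (G 0)))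
      = -((k+1 : ℝ) * y₀ j) := by
    rw [hG0, Real.sqrt_one]
    push_cast
    field_simp
    ring
  rw [hψval] at hψ
  have hφ : HasDerivAt φ (-((k+1 : ℝ) * tmul A y₀ j) - μ * (-((k+1 : ℝ) * y₀ j))) 0 :=
    hf.sub (hψ.const_mul μ)
  have hd : (-((k+1 : ℝ) * tmul A y₀ j) - μ * (-((k+1 : ℝ) * y₀ j))) < 0 := by
    have hk1 : (0:ℝ) < (k:ℝ) + 1 := by positivity
    nlinarith [mul_pos hk1 htj, mul_pos hk1 hyj, mul_nonneg (neg_nonneg.2 hμ) (mul_pos hk1 hyj).le]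
  obtain ⟨t, ht0, htε, hφt⟩ := exists_lt_of_hasDerivAt_neg hφ hd hyj
  have hφ0 : φ 0 = 0 := by
    rw [hφdef]
    simp only
    rw [hG0, Real.sqrt_one, one_pow]
    have : f 0 = μ := by
      rw [hfdef, hμdef]
      simp only [zero_mul, sub_zero]
    rw [this]
    ring
  rw [hφ0] at hφt
  -- now show 0 ≤ φ t, contradiction
  set z : Fin n → ℝ := fun i => y₀ i - t * (Pi.single j 1 : Fin n → ℝ) i with hzdef
  have hz0 : ∀ i, 0 ≤ z i := by
    intro i
    rw [hzdef]
    simp only [Pi.single_apply]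
    split
    · next h => subst h; simpa using le_of_lt (by linarith : (0:ℝ) < y₀ i - t * 1)
    · simpa using hy₀.1 i
  have hzj : 0 < z j := by
    rw [hzdef]
    simp [Pi.single_apply]
    linarith
  have hzne : z ≠ 0 := by
    intro h
    have := congrFun h j
    simp at this
    rw [this] at hzj
    exact lt_irrefl 0 hzj
  have hNz : NN z = Real.sqrt (G t) := rfl
  have hle := min_le_scaled A y₀ hmin z hz0 hzne
  have hft : f t = tpow A z := rfl
  have : 0 ≤ φ t := by
    rw [hφdef]
    simp only
    rw [hft, ← hNz]
    linarith [hle]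
  linarith

end Stmt8

theorem stmt8 {n k : ℕ} (hn : 1 ≤ n) (hk : 1 ≤ k) (A : (Fin (k + 1) → Fin n) → ℝ)
    (hsym : TSymmetric A) (hssp : StrictlySemiPositive A)
    (q x : Fin n → ℝ) (hx : TCPSol A q x) :
    pnorm 2 x ^ k ≤
      pnorm 2 (fun i => max (-q i) 0) /
        sInf {r : ℝ | ∃ y : Fin n → ℝ,
          (∀ i, 0 ≤ y i) ∧ pnorm 2 y = 1 ∧ tpow A y = r} := by
  obtain ⟨y₀, hy₀D, hmin⟩ := Stmt8.exists_min hn A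
  have hμpos : 0 < tpow A y₀ := Stmt8.min_pos hn A hsym hssp y₀ hy₀D hmin
  have hS : sInf {r : ℝ | ∃ y : Fin n → ℝ,
      (∀ i, 0 ≤ y i) ∧ pnorm 2 y = 1 ∧ tpow A y = r} = tpow A y₀ := by
    apply IsLeast.csInf_eq
    constructor
    · exact ⟨y₀, hy₀D.1, by rw [Stmt8.pnorm_two_eq]; exact hy₀D.2, rfl⟩
    · rintro r ⟨y, h1, h2, rfl⟩
      exact hmin y h1 (by rwa [Stmt8.pnorm_two_eq] at h2)
  rw [hS, Stmt8.pnorm_two_eq, Stmt8.pnorm_two_eq]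
  set p : Fin n → ℝ := fun i => max (-q i) 0 with hpdef
  obtain ⟨hx1, hx2, hx3⟩ := hx
  have hzero : ∀ i, x i * (q i + tmul A x i) = 0 := fun i =>
    (Finset.sum_eq_zero_iff_of_nonneg
      (fun i _ => mul_nonneg (hx1 i) (hx2 i))).1 hx3 i (Finset.mem_univ i)
  have hbound : tpow A x ≤ Stmt8.NN x * Stmt8.NN p := by
    unfold tpow
    calc ∑ i, x i * tmul A x i ≤ ∑ i, x i * p i := by
          refine Finset.sum_le_sum fun i _ => ?_
          have h0 := hzero i
          have heq : x i * tmul A x i = x i * (-q i) := by linear_combination h0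
          rw [heq]
          exact mul_le_mul_of_nonneg_left (le_max_left _ _) (hx1 i)
      _ ≤ _ := Real.sum_mul_le_sqrt_mul_sqrt Finset.univ x p
  by_cases hx0 : x = 0
  · subst hx0
    have h00 : Stmt8.NN (0 : Fin n → ℝ) = 0 := by unfold Stmt8.NN; simp
    rw [h00, zero_pow (by omega : k ≠ 0)]
    exact div_nonneg (Stmt8.NN_nonneg p) hμpos.le
  · have hNx := Stmt8.NN_pos hx0
    rw [le_div_iff₀ hμpos]
    have h1 : tpow A y₀ * Stmt8.NN x ^ (k+1) ≤ tpow A x :=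
      Stmt8.min_le_scaled A y₀ hmin x hx1 hx0
    have h3 : tpow A y₀ * (Stmt8.NN x ^ k * Stmt8.NN x) ≤ Stmt8.NN x * Stmt8.NN p := by
      rw [← pow_succ]; exact h1.trans hbound
    exact le_of_mul_le_mul_right (by nlinarith [h3]) hNx
end

section
/- Let A be a symmetric real tensor of order m and dimension n (with m ≥ 2, n ≥ 1). Then A is strictly semi-positive if and only if A is strictly copositive. -/
open Finset

/- ### Auxiliary lemmas -/

lemma tpow_eq_sum {n k : ℕ} (A : (Fin (k + 1) → Fin n) → ℝ) (x : Fin n → ℝ) :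
    tpow A x = ∑ g : Fin (k + 1) → Fin n, A g * ∏ p, x (g p) := by
  have h := Fintype.sum_equiv (Fin.consEquiv fun _ : Fin (k+1) => Fin n)
    (fun gp : Fin n × (Fin k → Fin n) =>
      A (Fin.cons gp.1 gp.2) * ∏ p, x ((Fin.cons gp.1 gp.2 : Fin (k+1) → Fin n) p))
    (fun g => A g * ∏ p, x (g p)) (fun gp => rfl)
  rw [tpow, ← h, Fintype.sum_prod_type]
  unfold tmul
  congr 1; ext i
  rw [Finset.mul_sum]
  congr 1; ext f
  rw [Fin.prod_univ_succ]
  simp only [Fin.cons_zero, Fin.cons_succ]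
  ring

lemma prod_erase_zero {k : ℕ} (f : Fin (k+1) → ℝ) :
    ∏ q ∈ Finset.univ.erase 0, f q = ∏ j : Fin k, f j.succ := by
  refine Finset.prod_bij' (fun q hq => q.pred (Finset.mem_erase.1 hq).1)
    (fun j _ => j.succ)
    (fun a _ => Finset.mem_univ _)
    (fun a _ => Finset.mem_erase.2 ⟨Fin.succ_ne_zero a, Finset.mem_univ _⟩)
    (fun a ha => Fin.succ_pred _ _)
    (fun a _ => Fin.pred_succ _)
    (fun a ha => by rw [Fin.succ_pred])

lemma key_sym {n k : ℕ} (A : (Fin (k + 1) → Fin n) → ℝ) (hsym : TSymmetric A)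
    (y v : Fin n → ℝ) (p : Fin (k + 1)) :
    ∑ g : Fin (k + 1) → Fin n, A g * (v (g p) * ∏ q ∈ Finset.univ.erase p, y (g q))
      = ∑ i, v i * tmul A y i := by
  set σ : Equiv.Perm (Fin (k+1)) := Equiv.swap 0 p with hσ
  have hinv : Function.Involutive (fun g : Fin (k+1) → Fin n => g ∘ ⇑σ) := by
    intro g; funext x; exact congrArg g (Equiv.swap_apply_self _ _ _)
  have step1 : ∑ g : Fin (k + 1) → Fin n, A g * (v (g 0) * ∏ q ∈ Finset.univ.erase 0, y (g q))
      = ∑ g : Fin (k + 1) → Fin n, A g * (v (g p) * ∏ q ∈ Finset.univ.erase p, y (g q)) := by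
    refine Fintype.sum_bijective _ hinv.bijective _ _ fun g => ?_
    have h1 : A (g ∘ ⇑σ) = A g := hsym σ g
    have h2 : (g ∘ ⇑σ) p = g 0 := congrArg g (Equiv.swap_apply_right 0 p)
    have h3 : ∏ q ∈ Finset.univ.erase p, y ((g ∘ ⇑σ) q) = ∏ q ∈ Finset.univ.erase 0, y (g q) := by
      refine Finset.prod_equiv σ (fun q => ?_) (fun q _ => rfl)
      have h4 : σ q = 0 ↔ q = p := by
        constructor
        · intro h
          exact σ.injective (h.trans (Equiv.swap_apply_right 0 p).symm)
        · rintro rfl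
          exact Equiv.swap_apply_right 0 _
      simp only [Finset.mem_erase, Finset.mem_univ, and_true]
      exact not_congr h4.symm
    rw [h1, h2, h3]
  rw [← step1]
  have h := Fintype.sum_equiv (Fin.consEquiv fun _ : Fin (k+1) => Fin n)
    (fun gp : Fin n × (Fin k → Fin n) =>
      A (Fin.cons gp.1 gp.2) * (v ((Fin.cons gp.1 gp.2 : Fin (k+1) → Fin n) 0) *
        ∏ q ∈ Finset.univ.erase 0, y ((Fin.cons gp.1 gp.2 : Fin (k+1) → Fin n) q)))
    (fun g => A g * (v (g 0) * ∏ q ∈ Finset.univ.erase 0, y (g q))) (fun gp => rfl)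
  rw [← h, Fintype.sum_prod_type]
  congr 1; ext i
  rw [tmul, Finset.mul_sum]
  congr 1; ext f
  rw [prod_erase_zero]
  simp only [Fin.cons_zero, Fin.cons_succ]
  ring

lemma tpow_smul {n k : ℕ} (A : (Fin (k + 1) → Fin n) → ℝ) (c : ℝ) (x : Fin n → ℝ) :
    tpow A (c • x) = c ^ (k + 1) * tpow A x := by
  rw [tpow_eq_sum, tpow_eq_sum, Finset.mul_sum]
  congr 1; ext g
  simp only [Pi.smul_apply, smul_eq_mul]
  rw [Finset.prod_mul_distrib, Finset.prod_const, Finset.card_univ, Fintype.card_fin]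
  ring

lemma tpow_continuous {n k : ℕ} (A : (Fin (k + 1) → Fin n) → ℝ) :
    Continuous fun x : Fin n → ℝ => tpow A x := by
  unfold tpow tmul
  exact continuous_finset_sum _ fun i _ =>
    (continuous_apply i).mul (continuous_finset_sum _ fun f _ =>
      continuous_const.mul (continuous_finset_prod _ fun j _ => continuous_apply (f j)))

lemma hasDerivAt_tpow {n k : ℕ} (A : (Fin (k + 1) → Fin n) → ℝ) (hsym : TSymmetric A)
    (y v : Fin n → ℝ) :
    HasDerivAt (fun t : ℝ => tpow A (y + t • v))
      (((k : ℝ) + 1) * ∑ i, v i * tmul A y i) 0 := by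
  have hfun : (fun t : ℝ => tpow A (y + t • v))
      = fun t : ℝ => ∑ g : Fin (k + 1) → Fin n, A g * ∏ p, (y (g p) + t * v (g p)) := by
    funext t
    rw [tpow_eq_sum]
    simp [Pi.add_apply, Pi.smul_apply, smul_eq_mul]
  rw [hfun]
  have hD : ∀ g : Fin (k + 1) → Fin n,
      HasDerivAt (fun t : ℝ => ∏ p, (y (g p) + t * v (g p)))
        (∑ p, (∏ q ∈ Finset.univ.erase p, (y (g q) + 0 * v (g q))) • v (g p)) 0 :=
    fun g => HasDerivAt.fun_finsetProd
      (fun p _ => (hasDerivAt_mul_const (v (g p))).const_add (y (g p)))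
  have hder : HasDerivAt
      (fun t : ℝ => ∑ g : Fin (k + 1) → Fin n, A g * ∏ p, (y (g p) + t * v (g p)))
      (∑ g : Fin (k + 1) → Fin n,
        A g * ∑ p, (∏ q ∈ Finset.univ.erase p, (y (g q) + 0 * v (g q))) • v (g p)) 0 :=
    HasDerivAt.fun_sum fun g _ => (hD g).const_mul (A g)
  convert hder using 1
  have hsimp : ∀ g : Fin (k + 1) → Fin n,
      (A g * ∑ p, (∏ q ∈ Finset.univ.erase p, (y (g q) + 0 * v (g q))) • v (g p))
        = ∑ p, A g * (v (g p) * ∏ q ∈ Finset.univ.erase p, y (g q)) := by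
    intro g
    rw [Finset.mul_sum]
    congr 1; ext p
    simp only [zero_mul, add_zero, smul_eq_mul]
    ring
  rw [Finset.sum_congr rfl fun g _ => hsimp g, Finset.sum_comm]
  rw [Finset.sum_congr rfl fun p _ => key_sym A hsym y v p]
  rw [Finset.sum_const, Finset.card_univ, Fintype.card_fin, nsmul_eq_mul]
  push_cast
  ring

theorem stmt11 {n k : ℕ} (hn : 1 ≤ n) (hk : 1 ≤ k) (A : (Fin (k + 1) → Fin n) → ℝ)
    (hsym : TSymmetric A) :
    StrictlySemiPositive A ↔
      ∀ x : Fin n → ℝ, (∀ i, 0 ≤ x i) → x ≠ 0 → 0 < tpow A x := by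
  constructor
  · intro hssp x hx hx0
    by_contra hle
    push_neg at hle
    -- normalize x into the standard simplex
    have hxne : ∃ i0, 0 < x i0 := by
      by_contra hcon
      push_neg at hcon
      exact hx0 (funext fun i => le_antisymm (hcon i) (hx i))
    obtain ⟨i0, hi0⟩ := hxne
    have hs : 0 < ∑ i, x i :=
      Finset.sum_pos' (fun i _ => hx i) ⟨i0, Finset.mem_univ _, hi0⟩
    set x' : Fin n → ℝ := (∑ i, x i)⁻¹ • x with hx'def
    have hx'mem : x' ∈ stdSimplex ℝ (Fin n) := by
      constructor
      · intro i
        exact mul_nonneg (inv_nonneg.2 hs.le) (hx i)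
      · simp only [hx'def, Pi.smul_apply, smul_eq_mul, ← Finset.mul_sum]
        field_simp
    -- minimizer of tpow on the simplex
    obtain ⟨y, hymem, hymin⟩ := (isCompact_stdSimplex ℝ (Fin n)).exists_isMinOn
      ⟨x', hx'mem⟩ (tpow_continuous A).continuousOn
    have hyF : tpow A y ≤ 0 := by
      have h1 : tpow A y ≤ tpow A x' := hymin hx'mem
      have h2 : tpow A x' ≤ 0 := by
        rw [hx'def, tpow_smul]
        exact mul_nonpos_of_nonneg_of_nonpos (by positivity) hle
      exact h1.trans h2
    have hy0 : y ≠ 0 := by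
      intro h
      have := hymem.2
      rw [h] at this
      simp at this
    obtain ⟨j, hyj, htj⟩ := hssp y hymem.1 hy0
    -- optimality: tmul at j is minimal among all components
    have hkey : ∀ i, tmul A y j ≤ tmul A y i := by
      intro i
      rcases eq_or_ne i j with rfl | hij
      · exact le_refl _
      set v : Fin n → ℝ := Pi.single i 1 - Pi.single j 1 with hv
      have hvsum : ∑ l, v l * tmul A y l = tmul A y i - tmul A y j := by
        simp only [hv, Pi.sub_apply, sub_mul]
        rw [Finset.sum_sub_distrib]
        congr 1
        · rw [Finset.sum_eq_single i]
          · simp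
          · intro b _ hb; simp [Pi.single_apply, hb]
          · intro h; exact absurd (Finset.mem_univ i) h
        · rw [Finset.sum_eq_single j]
          · simp
          · intro b _ hb; simp [Pi.single_apply, hb]
          · intro h; exact absurd (Finset.mem_univ j) h
      have hmemt : ∀ t : ℝ, 0 ≤ t → t ≤ y j → y + t • v ∈ stdSimplex ℝ (Fin n) := by
        intro t ht hty
        constructor
        · intro l
          simp only [Pi.add_apply, Pi.smul_apply, smul_eq_mul, hv, Pi.sub_apply]
          rcases eq_or_ne l j with rfl | hlj
          · rw [Pi.single_eq_of_ne hij.symm, Pi.single_eq_same]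
            linarith
          · rw [Pi.single_eq_of_ne hlj]
            rcases eq_or_ne l i with rfl | hli
            · rw [Pi.single_eq_same]
              have := hymem.1 l
              linarith
            · rw [Pi.single_eq_of_ne hli]
              have := hymem.1 l
              linarith
        · simp only [Pi.add_apply, Pi.smul_apply, smul_eq_mul]
          rw [Finset.sum_add_distrib, hymem.2, ← Finset.mul_sum]
          have : ∑ l, v l = 0 := by
            simp [hv, Finset.sum_sub_distrib, Finset.sum_pi_single]
          rw [this, mul_zero, add_zero]
      -- local min of t ↦ tpow A (y + t v) on Ici 0 at 0
      have hlocmin : IsLocalMinOn (fun t : ℝ => tpow A (y + t • v)) (Set.Ici (0:ℝ)) 0 := by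
        have hIic : Set.Iic (y j) ∈ nhds (0:ℝ) := Iic_mem_nhds hyj
        have h1 : ∀ᶠ t in nhdsWithin (0:ℝ) (Set.Ici 0), t ∈ Set.Iic (y j) :=
          Filter.eventually_iff_exists_mem.2 ⟨Set.Iic (y j),
            nhdsWithin_le_nhds hIic, fun t ht => ht⟩
        refine Filter.Eventually.mono (h1.and self_mem_nhdsWithin) ?_
        rintro t ⟨ht1, ht2⟩
        have hmem := hmemt t ht2 ht1
        have := hymin hmem
        simpa using this
      -- derivative nonneg
      have hderiv := hasDerivAt_tpow A hsym y v
      have hderivW : HasDerivWithinAt (fun t : ℝ => tpow A (y + t • v))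
          (((k : ℝ) + 1) * ∑ l, v l * tmul A y l) (Set.Ici (0:ℝ)) 0 :=
        hderiv.hasDerivWithinAt
      have hcone : (1:ℝ) ∈ posTangentConeAt (Set.Ici (0:ℝ)) 0 := by
        rw [one_mem_posTangentConeAt_iff_mem_closure]
        have : Set.Ioi (0:ℝ) ∩ Set.Ici 0 = Set.Ioi 0 :=
          Set.inter_eq_left.2 Set.Ioi_subset_Ici_self
        rw [this, closure_Ioi]
        exact Set.self_mem_Ici
      have hnonneg := hlocmin.hasFDerivWithinAt_nonneg hderivW.hasFDerivWithinAt hcone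
      simp only [ContinuousLinearMap.smulRight_apply, ContinuousLinearMap.one_apply, ContinuousLinearMap.toSpanSingleton_apply,
        one_smul, smul_eq_mul] at hnonneg
      rw [hvsum] at hnonneg
      have hk1 : (0:ℝ) < (k:ℝ) + 1 := by positivity
      nlinarith
    -- conclude tpow A y > 0, contradiction
    have hFy : tmul A y j ≤ tpow A y := by
      rw [tpow]
      calc tmul A y j = (∑ i, y i) * tmul A y j := by rw [hymem.2, one_mul]
        _ = ∑ i, y i * tmul A y j := by rw [Finset.sum_mul]
        _ ≤ ∑ i, y i * tmul A y i :=
            Finset.sum_le_sum fun i _ => mul_le_mul_of_nonneg_left (hkey i) (hymem.1 i)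
    linarith
  · intro h x hx hx0
    have hp := h x hx hx0
    rw [tpow] at hp
    have : ∃ i ∈ Finset.univ, 0 < x i * tmul A x i := by
      by_contra hcon
      push_neg at hcon
      have : ∑ i, x i * tmul A x i ≤ 0 :=
        Finset.sum_nonpos fun i hi => hcon i hi
      linarith
    obtain ⟨i, _, hi⟩ := this
    have hxi : 0 < x i := by
      rcases (hx i).lt_or_eq with h' | h'
      · exact h'
      · rw [← h', zero_mul] at hi; linarith
    have hti : 0 < tmul A x i := by
      by_contra hcon
      push_neg at hcon
      nlinarith
    exact ⟨i, hxi, hti⟩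
end

section
/- Let A be a strictly semi-positive real tensor of order m and dimension n (with m ≥ 2, n ≥ 1). Then for every q ∈ ℝⁿ with q ≥ 0, the tensor complementarity problem TCP(A,q) has x = 0 as its unique solution. -/
open Finset

theorem stmt12 {n k : ℕ} (hn : 1 ≤ n) (hk : 1 ≤ k) (A : (Fin (k + 1) → Fin n) → ℝ)
    (hssp : StrictlySemiPositive A) (q : Fin n → ℝ) (hq : ∀ i, 0 ≤ q i) :
    ∀ x : Fin n → ℝ, TCPSol A q x ↔ x = 0 := by
  have hzero : tmul A (0 : Fin n → ℝ) = 0 := by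
    funext i
    simp only [tmul, Pi.zero_apply]
    apply Finset.sum_eq_zero
    intro f _
    have : ∏ j : Fin k, (0 : ℝ) = 0 := by
      apply Finset.prod_eq_zero (Finset.mem_univ (⟨0, hk⟩ : Fin k))
      rfl
    simp [this]
  intro x
  constructor
  · rintro ⟨hx, hqx, hsum⟩
    by_contra hne
    obtain ⟨j, hxj, htj⟩ := hssp x hx hne
    have hterm : 0 < x j * (q j + tmul A x j) :=
      mul_pos hxj (lt_of_lt_of_le htj (by linarith [hq j]))
    have hnn : ∀ i ∈ Finset.univ, 0 ≤ x i * (q i + tmul A x i) :=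
      fun i _ => mul_nonneg (hx i) (hqx i)
    have := Finset.sum_eq_zero_iff_of_nonneg hnn |>.mp hsum j (Finset.mem_univ j)
    linarith
  · rintro rfl
    refine ⟨fun i => le_rfl, fun i => ?_, by simp⟩
    rw [hzero]
    simpa using hq i
end

section
/- Let A be a real tensor of order m and dimension n (with m ≥ 2, n ≥ 1). If A is a P-tensor, then A is strictly semi-positive. -/
open Finset

theorem stmt18 {n k : ℕ} (hn : 1 ≤ n) (hk : 1 ≤ k) (A : (Fin (k + 1) → Fin n) → ℝ)
    (hP : ∀ x : Fin n → ℝ, x ≠ 0 → ∃ i, 0 < x i * tmul A x i) :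
    StrictlySemiPositive A := by
  intro x hx hx0
  obtain ⟨i, hi⟩ := hP x hx0
  have hxi : 0 < x i := by
    rcases lt_or_eq_of_le (hx i) with h | h
    · exact h
    · simp [← h] at hi
  exact ⟨i, hxi, by nlinarith⟩
end

section
/- Let A be the real tensor of order 3 and dimension 2 with entries a₁₁₁ = 1, a₁₂₂ = 1, a₂₁₁ = 1, a₂₂₁ = −2, a₂₂₂ = 1 and all other entries zero, so that A x² = (x₁² + x₂², x₁² − 2x₁x₂ + x₂²)ᵀ, and let F(x) := A x² + q with q = (−3/2, −1/2)ᵀ. Then A is strictly semi-positive, but F is not pseudo-monotone on ℝ²₊: for x = (1,0)ᵀ and y = (1,1)ᵀ one has (x−y)ᵀF(y) > 0 while (x−y)ᵀF(x) < 0. -/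
open Finset

/-- The order-3 dimension-2 tensor of Example 2.1 (zero-based indices):
`a₁₁₁ = 1, a₁₂₂ = 1, a₂₁₁ = 1, a₂₂₁ = -2, a₂₂₂ = 1`, all other entries zero. -/
def exA : (Fin (2 + 1) → Fin 2) → ℝ := fun g =>
  if g = ![0, 0, 0] then 1
  else if g = ![0, 1, 1] then 1
  else if g = ![1, 0, 0] then 1
  else if g = ![1, 1, 0] then -2
  else if g = ![1, 1, 1] then 1
  else 0

lemma tmul_exA (u : Fin 2 → ℝ) :
    tmul exA u = ![u 0 ^ 2 + u 1 ^ 2, u 0 ^ 2 - 2 * u 0 * u 1 + u 1 ^ 2] := by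
  funext i
  rw [tmul, ← Equiv.sum_comp (finTwoArrowEquiv (Fin 2)).symm
      (fun f => exA (Fin.cons i f) * ∏ j, u (f j)), Fintype.sum_prod_type]
  fin_cases i <;>
    simp (config := { decide := true }) only [Fin.sum_univ_two, Fin.prod_univ_two, exA,
      finTwoArrowEquiv, Equiv.coe_fn_symm_mk, Matrix.cons_val_zero, Matrix.cons_val_one,
      Matrix.head_cons, Matrix.cons_val', Matrix.cons_val_fin_one, Matrix.empty_val',
      if_true, if_false] <;>
    norm_num <;> ring

theorem stmt19 :
    StrictlySemiPositive exA ∧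
    (∀ u : Fin 2 → ℝ, tmul exA u = ![u 0 ^ 2 + u 1 ^ 2, u 0 ^ 2 - 2 * u 0 * u 1 + u 1 ^ 2]) ∧
    (let q : Fin 2 → ℝ := ![-(3 / 2), -(1 / 2)]
     let F : (Fin 2 → ℝ) → Fin 2 → ℝ := fun u i => tmul exA u i + q i
     let x : Fin 2 → ℝ := ![1, 0]
     let y : Fin 2 → ℝ := ![1, 1]
     0 < ∑ i, (x i - y i) * F y i ∧
     (∑ i, (x i - y i) * F x i) < 0 ∧
     ¬ ∀ u v : Fin 2 → ℝ, (∀ i, 0 ≤ u i) → (∀ i, 0 ≤ v i) →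
        0 ≤ ∑ i, (u i - v i) * F v i → 0 ≤ ∑ i, (u i - v i) * F u i) := by
  refine ⟨?_, tmul_exA, ?_, ?_, ?_⟩
  · intro x hx hx0
    rcases eq_or_lt_of_le (hx 0) with h0 | h0
    · have h1 : 0 < x 1 := by
        rcases eq_or_lt_of_le (hx 1) with h1 | h1
        · exfalso; apply hx0; funext i; fin_cases i <;> simp [← h0, ← h1]
        · exact h1
      refine ⟨1, h1, ?_⟩
      rw [tmul_exA]
      simp only [Matrix.cons_val_one, Matrix.head_cons, Matrix.cons_val_zero]
      nlinarith
    · refine ⟨0, h0, ?_⟩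
      rw [tmul_exA]
      simp only [Matrix.cons_val_zero]
      nlinarith [sq_nonneg (x 1)]
  · simp [Fin.sum_univ_two, tmul_exA]; norm_num
  · simp [Fin.sum_univ_two, tmul_exA]; norm_num
  · intro h
    have := h ![1, 0] ![1, 1] (by intro i; fin_cases i <;> norm_num)
      (by intro i; fin_cases i <;> norm_num)
      (by simp [Fin.sum_univ_two, tmul_exA]; norm_num)
    simp [Fin.sum_univ_two, tmul_exA] at this
    norm_num at this
end
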